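/- arXiv:1001.2986 — 3 statements merged into one kernel-verified Lean document; each statement's English description precedes it below -/
import Mathlib

section
/- Let $B > 1$ and let $(\theta_j)$ be nonnegative reals indexed by an integer interval $I = [s_k, s_{k+1}) \cap \mathbb{Z}$. Suppose $B^{-1}\theta_{s_k} \le \theta_j \le B\,\theta_{s_k}$ for all $j \in I$ (with $\theta_{s_k} > 0$). Let $\mathcal{G} \subseteq I$ and let $j_0 = \min(I \cap \mathcal{G})$ exist, and suppose $\sum_{j \in I \setminus \mathcal{G}} \theta_j^2 \le \sum_{j \in I \cap \mathcal{G}} \theta_j^2$. Then $j_0 - s_k \le \frac{B^4}{1+B^4}(s_{k+1} - s_k)$. -/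
open Finset

/-!
Below $j_0$ every scale of the interval is bad and each carries mass at least $B^{-2}\theta_{s_k}^2$,
while the good scales all lie in $[j_0, s_{k+1})$ and each carries mass at most $B^2\theta_{s_k}^2$.
So a good interval forces, with $\lambda = j_0 - s_k$ and $\ell = s_{k+1} - s_k$,
$\lambda B^{-2} \le (\ell - \lambda) B^2$, i.e. $\lambda \le B^4(\ell - \lambda)$,
which rearranges to $\lambda \le \frac{B^4}{1+B^4}\ell$.
-/

section FirstGoodIndex

variable {a b j₀ : ℕ} {G : Finset ℕ}

lemma Ico_subset_sdiff_of_forall_le (hj₀b : j₀ ≤ b) (hmin : ∀ j ∈ Ico a b ∩ G, j₀ ≤ j) :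
    Ico a j₀ ⊆ Ico a b \ G := by
  intro j hj
  obtain ⟨haj, hjj₀⟩ := mem_Ico.mp hj
  have hjI : j ∈ Ico a b := mem_Ico.mpr ⟨haj, hjj₀.trans_le hj₀b⟩
  exact mem_sdiff.mpr ⟨hjI, fun hjG => (hmin j (mem_inter.mpr ⟨hjI, hjG⟩)).not_gt hjj₀⟩

lemma inter_subset_Ico_of_forall_le (hmin : ∀ j ∈ Ico a b ∩ G, j₀ ≤ j) :
    Ico a b ∩ G ⊆ Ico j₀ b :=
  fun j hj => mem_Ico.mpr ⟨hmin j hj, (mem_Ico.mp (mem_inter.mp hj).1).2⟩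

variable {M : Type*} [AddCommMonoid M] [PartialOrder M] [IsOrderedAddMonoid M] {f : ℕ → M} {m : M}

lemma nsmul_le_sum_sdiff_of_forall_le (hm : 0 ≤ m) (hf : ∀ j ∈ Ico a b, m ≤ f j)
    (hj₀b : j₀ ≤ b) (hmin : ∀ j ∈ Ico a b ∩ G, j₀ ≤ j) :
    (j₀ - a) • m ≤ ∑ j ∈ Ico a b \ G, f j := by
  have hsub := Ico_subset_sdiff_of_forall_le hj₀b hmin
  calc (j₀ - a) • m = #(Ico a j₀) • m := by rw [Nat.card_Ico]
    _ ≤ ∑ j ∈ Ico a j₀, f j := card_nsmul_le_sum _ _ _ fun j hj => hf j (mem_sdiff.mp (hsub hj)).1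
    _ ≤ ∑ j ∈ Ico a b \ G, f j :=
        sum_le_sum_of_subset_of_nonneg hsub fun j hj _ => hm.trans (hf j (mem_sdiff.mp hj).1)

lemma sum_inter_le_nsmul_of_forall_le (hm : 0 ≤ m) (hf : ∀ j ∈ Ico a b, f j ≤ m)
    (hmin : ∀ j ∈ Ico a b ∩ G, j₀ ≤ j) :
    ∑ j ∈ Ico a b ∩ G, f j ≤ (b - j₀) • m := by
  have hcard : #(Ico a b ∩ G) ≤ b - j₀ := by
    simpa only [Nat.card_Ico] using card_le_card (inter_subset_Ico_of_forall_le hmin)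
  calc ∑ j ∈ Ico a b ∩ G, f j ≤ #(Ico a b ∩ G) • m :=
        sum_le_card_nsmul _ _ _ fun j hj => hf j (mem_inter.mp hj).1
    _ ≤ (b - j₀) • m := nsmul_le_nsmul_left hm hcard

end FirstGoodIndex

lemma le_div_one_add_mul_of_le_mul_sub {c x y : ℝ} (hc : 0 ≤ c) (h : x ≤ c * (y - x)) :
    x ≤ c / (1 + c) * y := by
  rw [div_mul_eq_mul_div, le_div_iff₀ (by positivity)]
  linarith

theorem stmt3_general (B : ℝ) (θ : ℕ → ℝ) (sk sk1 : ℕ)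
    (hθpos : 0 < θ sk)
    (hcomp : ∀ j ∈ Finset.Ico sk sk1, B⁻¹ * θ sk ≤ θ j ∧ θ j ≤ B * θ sk)
    (G : Finset ℕ) (j0 : ℕ) (hj0 : j0 ∈ Finset.Ico sk sk1 ∩ G)
    (hj0min : ∀ j ∈ Finset.Ico sk sk1 ∩ G, j0 ≤ j)
    (hgood : ∑ j ∈ Finset.Ico sk sk1 \ G, (θ j) ^ 2
        ≤ ∑ j ∈ Finset.Ico sk sk1 ∩ G, (θ j) ^ 2) :
    (j0 : ℝ) - sk ≤ B ^ 4 / (1 + B ^ 4) * ((sk1 : ℝ) - sk) := by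
  obtain ⟨hskj0, hj0sk1⟩ := mem_Ico.mp (mem_inter.mp hj0).1
  have hB : 0 < B := by
    have := (hcomp sk (mem_Ico.mpr ⟨le_rfl, hskj0.trans_lt hj0sk1⟩)).2
    nlinarith
  have hlower : ∀ j ∈ Ico sk sk1, (B⁻¹ * θ sk) ^ 2 ≤ θ j ^ 2 := fun j hj =>
    pow_le_pow_left₀ (by positivity) (hcomp j hj).1 2
  have hupper : ∀ j ∈ Ico sk sk1, θ j ^ 2 ≤ (B * θ sk) ^ 2 := fun j hj =>
    pow_le_pow_left₀ ((by positivity : 0 ≤ B⁻¹ * θ sk).trans (hcomp j hj).1) (hcomp j hj).2 2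
  have hmass : ((j0 : ℝ) - sk) * (B⁻¹ * θ sk) ^ 2 ≤ ((sk1 : ℝ) - j0) * (B * θ sk) ^ 2 := by
    have := (nsmul_le_sum_sdiff_of_forall_le (by positivity) hlower hj0sk1.le hj0min).trans
      (hgood.trans (sum_inter_le_nsmul_of_forall_le (by positivity) hupper hj0min))
    rwa [nsmul_eq_mul, nsmul_eq_mul, Nat.cast_sub hskj0, Nat.cast_sub hj0sk1.le] at this
  have hratio : (j0 : ℝ) - sk ≤ B ^ 4 * ((sk1 : ℝ) - j0) := by
    have := mul_le_mul_of_nonneg_right hmass (by positivity : (0 : ℝ) ≤ B ^ 2 / θ sk ^ 2)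
    field_simp at this
    exact this
  refine le_div_one_add_mul_of_le_mul_sub (by positivity) ?_
  linarith

theorem stmt3 (B : ℝ) (hB : 1 < B) (θ : ℕ → ℝ) (sk sk1 : ℕ) (hlt : sk < sk1)
    (hθpos : 0 < θ sk)
    (hcomp : ∀ j ∈ Finset.Ico sk sk1, B⁻¹ * θ sk ≤ θ j ∧ θ j ≤ B * θ sk)
    (G : Finset ℕ) (j0 : ℕ) (hj0 : j0 ∈ Finset.Ico sk sk1 ∩ G)
    (hj0min : ∀ j ∈ Finset.Ico sk sk1 ∩ G, j0 ≤ j)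
    (hgood : ∑ j ∈ Finset.Ico sk sk1 \ G, (θ j) ^ 2
        ≤ ∑ j ∈ Finset.Ico sk sk1 ∩ G, (θ j) ^ 2) :
    (j0 : ℝ) - sk ≤ B ^ 4 / (1 + B ^ 4) * ((sk1 : ℝ) - sk) :=
  stmt3_general B θ sk sk1 hθpos hcomp G j0 hj0 hj0min hgood
end

section
/- Let $B > 1$, $\theta_0^{\max} > 0$, and let $(\theta_i^{\max})_{i \ge 1}$ be positive reals. Suppose there exists a constant $C > 0$ (independent of $B$) such that for all $i \ge 1$: $\theta_i^{\max} \le C\big[ B^{-1/(2s)} B^{-(i-1)/(8s)} \theta_0^{\max} + \sum_{j=1}^{i-1} B^{(j-i)/(2s)} B^{-(j-1)/(8s)} \theta_0^{\max} + B^{-i/(2s)} \theta_0^{\max} \big]$, where $s \ge 1$ is fixed. Then there exists $B_0$ depending only on $C$ and $s$ such that for all $B \ge B_0$ and all $i \ge 1$, $\theta_i^{\max} \le B^{-i/(8s)} \theta_0^{\max}$. -/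
/-!
Put `u = B ^ (1 / (8 s))`, so that every power of `B` in the hypothesis becomes a power of `u`.
The first and last terms of the bracket are at most `u⁻³ · u⁻ⁱ`, and the middle one is a
geometric sum in `u³` bounded by `u / (u³ - 1) · u⁻ⁱ`. For `u ≥ 2` the bracket is therefore at
most `(3 / u) · u⁻ⁱ`, and `B ≥ max 2 (3C) ^ (8s)` makes `3C / u ≤ 1`.
-/

open Finset

theorem Real.rpow_div_eq_rpow_inv_rpow {B : ℝ} (hB : 0 ≤ B) (x c : ℝ) :
    B ^ (x / c) = (B ^ c⁻¹) ^ x := by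
  rw [div_eq_mul_inv, mul_comm, Real.rpow_mul hB]

section
variable {u : ℝ}

theorem sum_Icc_rpow_le (hu : 1 < u) {i : ℕ} (hi : 1 ≤ i) :
    ∑ j ∈ Icc 1 (i - 1), u ^ (4 * ((j : ℝ) - i)) * u ^ (-((j : ℝ) - 1))
      ≤ u / (u ^ 3 - 1) * u ^ (-(i : ℝ)) := by
  have hu0 : 0 < u := by linarith
  have hr : 1 < u ^ 3 := one_lt_pow₀ hu (by norm_num)
  have hterm (j : ℕ) :
      u ^ (4 * ((j : ℝ) - i)) * u ^ (-((j : ℝ) - 1)) = u ^ (1 - 4 * (i : ℝ)) * (u ^ 3) ^ j := by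
    rw [← pow_mul, ← Real.rpow_natCast, ← Real.rpow_add hu0, ← Real.rpow_add hu0]
    congr 1
    push_cast
    ring
  rw [Icc_sub_one_right_eq_Ico_of_not_isMin (by simp; omega),
    sum_congr rfl fun j _ => hterm j, ← mul_sum, geom_sum_Ico hr.ne' hi]
  have hpow : u ^ (1 - 4 * (i : ℝ)) * (u ^ 3) ^ i = u * u ^ (-(i : ℝ)) := by
    rw [← pow_mul, ← Real.rpow_natCast, ← Real.rpow_add hu0,
      show 1 - 4 * (i : ℝ) + ((3 * i : ℕ) : ℝ) = 1 + -(i : ℝ) by push_cast; ring,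
      Real.rpow_add hu0, Real.rpow_one]
  calc u ^ (1 - 4 * (i : ℝ)) * (((u ^ 3) ^ i - (u ^ 3) ^ 1) / (u ^ 3 - 1))
      ≤ u ^ (1 - 4 * (i : ℝ)) * ((u ^ 3) ^ i / (u ^ 3 - 1)) := by
        gcongr
        linarith
    _ = u / (u ^ 3 - 1) * u ^ (-(i : ℝ)) := by
        rw [mul_div_assoc', hpow]; ring

theorem two_div_pow_three_add_div_le (hu : 2 ≤ u) : 2 / u ^ 3 + u / (u ^ 3 - 1) ≤ 3 / u := by
  have hu0 : 0 < u := by linarith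
  have h3 : 2 * u ≤ u ^ 3 := by nlinarith [mul_le_mul hu hu (by norm_num) hu0.le]
  have h1 : 2 / u ^ 3 ≤ 1 / u := by
    rw [div_le_div_iff₀ (by positivity) hu0]; linarith
  have h2 : u / (u ^ 3 - 1) ≤ 2 / u := by
    rw [div_le_div_iff₀ (by nlinarith) hu0]; nlinarith
  linarith [show 1 / u + 2 / u = 3 / u by ring]

theorem recursion_bracket_le (hu : 2 ≤ u) {i : ℕ} (hi : 1 ≤ i) :
    u ^ (4 * -1 : ℝ) * u ^ (-((i : ℝ) - 1))
        + ∑ j ∈ Icc 1 (i - 1), u ^ (4 * ((j : ℝ) - i)) * u ^ (-((j : ℝ) - 1))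
        + u ^ (4 * -(i : ℝ)) ≤ 3 / u * u ^ (-(i : ℝ)) := by
  have hu0 : 0 < u := by linarith
  have hi' : (1 : ℝ) ≤ i := by exact_mod_cast hi
  have hshift : u ^ (-3 + -(i : ℝ)) = 1 / u ^ 3 * u ^ (-(i : ℝ)) := by
    rw [Real.rpow_add hu0, Real.rpow_neg hu0.le, one_div]
    norm_cast
  have hfirst : u ^ (4 * -1 : ℝ) * u ^ (-((i : ℝ) - 1)) = 1 / u ^ 3 * u ^ (-(i : ℝ)) := by
    rw [← Real.rpow_add hu0, ← hshift]
    ring_nf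
  have hlast : u ^ (4 * -(i : ℝ)) ≤ 1 / u ^ 3 * u ^ (-(i : ℝ)) := by
    rw [← hshift]
    exact Real.rpow_le_rpow_of_exponent_le (by linarith) (by linarith)
  calc _ ≤ 1 / u ^ 3 * u ^ (-(i : ℝ)) + u / (u ^ 3 - 1) * u ^ (-(i : ℝ))
          + 1 / u ^ 3 * u ^ (-(i : ℝ)) := by
        rw [hfirst]
        gcongr
        exact sum_Icc_rpow_le (by linarith) hi
    _ = (2 / u ^ 3 + u / (u ^ 3 - 1)) * u ^ (-(i : ℝ)) := by ring
    _ ≤ 3 / u * u ^ (-(i : ℝ)) := by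
        gcongr
        exact two_div_pow_three_add_div_le hu
end

theorem stmt4 (C s : ℝ) (hC : 0 < C) (hs : 1 ≤ s) :
    ∃ B0 : ℝ, 1 < B0 ∧ ∀ B : ℝ, B0 ≤ B → ∀ θ : ℕ → ℝ, 0 < θ 0 →
      (∀ i : ℕ, 1 ≤ i → 0 < θ i) →
      (∀ i : ℕ, 1 ≤ i →
        θ i ≤ C * (B ^ (-(1 : ℝ) / (2 * s)) * B ^ (-((i : ℝ) - 1) / (8 * s)) * θ 0
          + (∑ j ∈ Finset.Icc 1 (i - 1),
              B ^ (((j : ℝ) - (i : ℝ)) / (2 * s)) * B ^ (-((j : ℝ) - 1) / (8 * s))) * θ 0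
          + B ^ (-(i : ℝ) / (2 * s)) * θ 0)) →
      ∀ i : ℕ, 1 ≤ i → θ i ≤ B ^ (-(i : ℝ) / (8 * s)) * θ 0 := by
  have hs8 : 0 < 8 * s := by linarith
  set u₀ := max 2 (3 * C)
  have hu₀ : 2 ≤ u₀ := le_max_left _ _
  refine ⟨u₀ ^ (8 * s), Real.one_lt_rpow (by linarith) hs8, ?_⟩
  intro B hB θ hθ0 _ hrec i hi
  have hB0 : 0 ≤ B := le_trans (by positivity) hB
  set u := B ^ (8 * s)⁻¹
  have hu : u₀ ≤ u := by
    have := Real.rpow_le_rpow (by positivity) hB (inv_nonneg.2 hs8.le)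
    rwa [Real.rpow_rpow_inv (by positivity) hs8.ne'] at this
  have h8 : ∀ x : ℝ, B ^ (x / (8 * s)) = u ^ x := fun x => Real.rpow_div_eq_rpow_inv_rpow hB0 x _
  have h2 : ∀ x : ℝ, B ^ (x / (2 * s)) = u ^ (4 * x) := fun x => by
    rw [← h8]; congr 1; field_simp; ring
  simp only [h8, h2] at hrec ⊢
  have hu2 : 2 ≤ u := hu₀.trans hu
  have hCu : 3 * C ≤ u := (le_max_right _ _).trans hu
  calc θ i ≤ C * (u ^ (4 * -1 : ℝ) * u ^ (-((i : ℝ) - 1))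
        + ∑ j ∈ Icc 1 (i - 1), u ^ (4 * ((j : ℝ) - i)) * u ^ (-((j : ℝ) - 1))
        + u ^ (4 * -(i : ℝ))) * θ 0 := by
        convert hrec i hi using 1; ring
    _ ≤ C * (3 / u * u ^ (-(i : ℝ))) * θ 0 := by
        gcongr
        exact recursion_bracket_le hu2 hi
    _ = 3 * C / u * (u ^ (-(i : ℝ)) * θ 0) := by ring
    _ ≤ u ^ (-(i : ℝ)) * θ 0 := by
        refine mul_le_of_le_one_left (by positivity) ?_
        rw [div_le_one (by linarith)]
        exact hCu
end

section
/- Let $0 < s < d$ and let $\mu$ be the natural measure on the Cantor set $E_N$ with ratios $0 < \lambda_n \le \tau_0 < 1/2$. Let $Q$ be a generation-$n$ cube ($n \ge 1$) with parent $\widehat{Q}$. Then for all $x, x' \in Q$, $\big| \int_{\mathbb{R}^d \setminus Q} K(x-y)\,d\mu(y) - \int_{\mathbb{R}^d \setminus Q} K(x'-y)\,d\mu(y) \big| \le C\, \frac{\ell(Q)}{\ell(\widehat{Q})}\, p(\widehat{Q})$, where $p(\widehat{Q}) = \sum_{P \supseteq \widehat{Q}} \theta(P)\,\ell(\widehat{Q})/\ell(P)$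 (sum over ancestor cubes $P$ of $\widehat{Q}$ in the construction, including $\widehat{Q}$), $\theta(P) = \mu(P)/\ell(P)^s$, and $K(x) = x/|x|^{s+1}$. -/
open MeasureTheory Finset

/-- The generation-`n` cube of the corner Cantor construction in `ℝ^d`. -/
noncomputable def cantorCube (d : ℕ) (ℓ : ℕ → ℝ) (n : ℕ) (ε : Fin n → Fin d → Bool) :
    Set (EuclideanSpace ℝ (Fin d)) :=
  {x | ∀ j : Fin d,
    (∑ i : Fin n, if ε i j then ℓ (i : ℕ) - ℓ ((i : ℕ) + 1) else 0) ≤ x j ∧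
    x j ≤ (∑ i : Fin n, if ε i j then ℓ (i : ℕ) - ℓ ((i : ℕ) + 1) else 0) + ℓ n}

/-- The `N`-th generation set `E_N` of the Cantor construction. -/
noncomputable def cantorE (d : ℕ) (ℓ : ℕ → ℝ) (N : ℕ) : Set (EuclideanSpace ℝ (Fin d)) :=
  ⋃ ε : Fin N → Fin d → Bool, cantorCube d ℓ N ε

/-- The normalized Lebesgue measure on `E_N`. -/
noncomputable def cantorMeasure (d : ℕ) (ℓ : ℕ → ℝ) (N : ℕ) :
    Measure (EuclideanSpace ℝ (Fin d)) :=
  (volume (cantorE d ℓ N))⁻¹ • volume.restrict (cantorE d ℓ N)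

/-!
Let `Q_0 ⊇ Q_1 ⊇ ⋯ ⊇ Q_{n+1} = Q` be the ancestors of `Q`. A point `y ∈ E_N \ Q` lies in some
`Q_m \ Q_{m+1}` with `m ≤ n`, and since `λ ≤ τ₀ < 1/2` the generation-`(m+1)` children of `Q_m`
are separated by gaps of width `ℓ_m - 2ℓ_{m+1} ≥ (1 - 2τ₀) ℓ_m`; hence `|x - y| ≥ (1 - 2τ₀) ℓ_m`
for all `x ∈ Q`. The smoothness of `K(z) = z / |z|^{s+1}` away from the origin then bounds
`|K(x - y) - K(x' - y)|` by `(s + 2) |x - x'| / ((1 - 2τ₀) ℓ_m)^{s+1}` on `Q_m`, and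
`|x - x'| ≤ √d ℓ_{n+1}`. Integrating this step function over the `Q_m` gives
`∑_m μ(Q_m) ℓ_{n+1} / ℓ_m^{s+1} = (ℓ_{n+1} / ℓ_n) ∑_m θ(Q_m) ℓ_n / ℓ_m` up to the constant.
-/

lemma one_sub_rpow_neg_le_mul_sub_one {w q : ℝ} (hw : 0 < w) (hq : 0 ≤ q) :
    1 - w ^ (-q) ≤ q * (w - 1) := by
  -- `w ^ (-q) = exp (-q log w) ≥ 1 - q log w ≥ 1 - q (w - 1)`
  have hexp := Real.add_one_le_exp (Real.log w * -q)
  have hlog := Real.log_le_sub_one_of_pos hw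
  rw [Real.rpow_def_of_pos hw]
  nlinarith

lemma rpow_neg_sub_rpow_neg_mul_le {u v p : ℝ} (hu : 0 < u) (hv : 0 < v) (hp : 0 ≤ p) :
    (v ^ (-p) - u ^ (-p)) * v ≤ p * v ^ (-p) * (u - v) := by
  have h := one_sub_rpow_neg_le_mul_sub_one (div_pos hu hv) hp
  rw [Real.div_rpow hu.le hv.le] at h
  have hvp : 0 < v ^ (-p) := Real.rpow_pos_of_pos hv _
  have := mul_le_mul_of_nonneg_left h (mul_pos hvp hv).le
  field_simp at this ⊢
  linarith

theorem norm_rpow_neg_smul_sub_le {E : Type*} [NormedAddCommGroup E] [NormedSpace ℝ E]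
    {p r : ℝ} (hp : 0 ≤ p) (hr : 0 < r) {a b : E} (ha : r ≤ ‖a‖) (hb : r ≤ ‖b‖) :
    ‖‖a‖ ^ (-p) • a - ‖b‖ ^ (-p) • b‖ ≤ (p + 1) * ‖a - b‖ / r ^ p := by
  -- Splitting off `(‖b‖ ^ (-p) - ‖a‖ ^ (-p)) • b` with the shorter of the two vectors keeps that
  -- term of size `p ‖a - b‖ / r ^ p`, whatever the size of `‖a‖`.
  wlog hba : ‖b‖ ≤ ‖a‖ generalizing a b
  · rw [norm_sub_rev, norm_sub_rev a]
    exact this hb ha (le_of_not_ge hba)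
  have hu : 0 < ‖a‖ := hr.trans_le ha
  have hv : 0 < ‖b‖ := hr.trans_le hb
  have hdecomp : ‖a‖ ^ (-p) • a - ‖b‖ ^ (-p) • b
      = ‖a‖ ^ (-p) • (a - b) - (‖b‖ ^ (-p) - ‖a‖ ^ (-p)) • b := by
    rw [smul_sub, sub_smul]; abel
  have hanti : ∀ {w}, r ≤ w → w ^ (-p) ≤ (r ^ p)⁻¹ := fun hw => by
    rw [← Real.rpow_neg hr.le]; exact Real.rpow_le_rpow_of_nonpos hr hw (neg_nonpos.2 hp)
  have hmono : ‖a‖ ^ (-p) ≤ ‖b‖ ^ (-p) :=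
    Real.rpow_le_rpow_of_nonpos hv hba (neg_nonpos.2 hp)
  have hdiff : (‖b‖ ^ (-p) - ‖a‖ ^ (-p)) * ‖b‖ ≤ p * (r ^ p)⁻¹ * ‖a - b‖ :=
    calc (‖b‖ ^ (-p) - ‖a‖ ^ (-p)) * ‖b‖ ≤ p * ‖b‖ ^ (-p) * (‖a‖ - ‖b‖) :=
          rpow_neg_sub_rpow_neg_mul_le hu hv hp
      _ ≤ p * (r ^ p)⁻¹ * ‖a - b‖ := by
          gcongr
          · exact hanti hb
          · exact norm_sub_norm_le a b
  calc ‖‖a‖ ^ (-p) • a - ‖b‖ ^ (-p) • b‖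
      ≤ ‖a‖ ^ (-p) * ‖a - b‖ + (‖b‖ ^ (-p) - ‖a‖ ^ (-p)) * ‖b‖ := by
        rw [hdecomp]
        refine (norm_sub_le _ _).trans_eq ?_
        rw [norm_smul, norm_smul, Real.norm_of_nonneg (by positivity),
          Real.norm_of_nonneg (sub_nonneg.2 hmono)]
    _ ≤ (r ^ p)⁻¹ * ‖a - b‖ + p * (r ^ p)⁻¹ * ‖a - b‖ := by
        gcongr
        exact hanti ha
    _ = (p + 1) * ‖a - b‖ / r ^ p := by ring

lemma norm_integral_le_sum_measureReal_mul {α E ι : Type*} [MeasurableSpace α]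
    [NormedAddCommGroup E] [NormedSpace ℝ E] {ν : Measure α} [IsFiniteMeasure ν]
    (t : Finset ι) {A : ι → Set α} (hA : ∀ i, MeasurableSet (A i)) {b : ι → ℝ}
    (hb : ∀ i, 0 ≤ b i) {F : α → E}
    (hF : ∀ᵐ y ∂ν, ∃ i ∈ t, y ∈ A i ∧ ‖F y‖ ≤ b i) :
    ‖∫ y, F y ∂ν‖ ≤ ∑ i ∈ t, ν.real (A i) * b i := by
  have hint : ∀ i ∈ t, Integrable ((A i).indicator fun _ => b i) ν :=
    fun i _ => (integrable_const _).indicator (hA i)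
  calc ‖∫ y, F y ∂ν‖ ≤ ∫ y, ∑ i ∈ t, (A i).indicator (fun _ => b i) y ∂ν := by
        refine norm_integral_le_of_norm_le (integrable_finsetSum t hint) ?_
        filter_upwards [hF] with y ⟨i, hit, hyA, hFy⟩
        calc ‖F y‖ ≤ (A i).indicator (fun _ => b i) y := by rwa [Set.indicator_of_mem hyA]
          _ ≤ ∑ i ∈ t, (A i).indicator (fun _ => b i) y :=
            single_le_sum (fun i _ => Set.indicator_nonneg (fun _ _ => hb i) y) hit
    _ = ∑ i ∈ t, ν.real (A i) * b i := by
        rw [integral_finsetSum t hint]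
        simp only [integral_indicator_const _ (hA _), smul_eq_mul]

lemma norm_le_sqrt_card_mul_of_abs_le {ι : Type*} [Fintype ι] (x : EuclideanSpace ℝ ι) {r : ℝ}
    (hr : 0 ≤ r) (h : ∀ i, |x i| ≤ r) : ‖x‖ ≤ √(Fintype.card ι) * r := by
  rw [EuclideanSpace.norm_eq, ← Real.sqrt_sq hr, ← Real.sqrt_mul (Nat.cast_nonneg _)]
  refine Real.sqrt_le_sqrt ?_
  calc ∑ i, ‖x i‖ ^ 2 ≤ ∑ _i : ι, r ^ 2 :=
        sum_le_sum fun i _ => by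
          rw [Real.norm_eq_abs]; exact pow_le_pow_left₀ (abs_nonneg _) (h i) 2
    _ = Fintype.card ι * r ^ 2 := by simp

/- An address `δ : ℕ → Fin d → Bool` chooses, in every generation and every coordinate, the lower
or the upper subinterval; `pathCube d ℓ δ m` is the generation-`m` cube along it, so a single
address describes a cube together with all its ancestors. -/
noncomputable def pathCube (d : ℕ) (ℓ : ℕ → ℝ) (δ : ℕ → Fin d → Bool) (m : ℕ) :
    Set (EuclideanSpace ℝ (Fin d)) :=
  cantorCube d ℓ m (fun i => δ i)

noncomputable def cubeCorner (d : ℕ) (ℓ : ℕ → ℝ) (δ : ℕ → Fin d → Bool) (m : ℕ) (j : Fin d) :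
    ℝ :=
  ∑ i ∈ range m, if δ i j then ℓ i - ℓ (i + 1) else 0

def natAddress {d k : ℕ} (ε : Fin k → Fin d → Bool) (i : ℕ) : Fin d → Bool :=
  if h : i < k then ε ⟨i, h⟩ else fun _ => false

section
variable {d : ℕ} {ℓ : ℕ → ℝ}

lemma mem_pathCube {δ : ℕ → Fin d → Bool} {m : ℕ} {x : EuclideanSpace ℝ (Fin d)} :
    x ∈ pathCube d ℓ δ m ↔
      ∀ j, cubeCorner d ℓ δ m j ≤ x j ∧ x j ≤ cubeCorner d ℓ δ m j + ℓ m := by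
  simp only [pathCube, cantorCube, cubeCorner, Set.mem_ofPred_eq]
  exact forall_congr' fun j => by
    rw [Fin.sum_univ_eq_sum_range (fun i => if δ i j then ℓ i - ℓ (i + 1) else 0)]

lemma cubeCorner_succ (δ : ℕ → Fin d → Bool) (m : ℕ) (j : Fin d) :
    cubeCorner d ℓ δ (m + 1) j =
      cubeCorner d ℓ δ m j + if δ m j then ℓ m - ℓ (m + 1) else 0 :=
  sum_range_succ _ _

lemma cubeCorner_congr {δ δ' : ℕ → Fin d → Bool} {m : ℕ} (h : ∀ i < m, δ i = δ' i)
    (j : Fin d) :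
    cubeCorner d ℓ δ m j = cubeCorner d ℓ δ' m j :=
  sum_congr rfl fun i hi => by rw [h i (mem_range.1 hi)]

lemma cantorCube_eq_pathCube_natAddress {k m : ℕ} (ε : Fin k → Fin d → Bool)
    (h : ∀ i : Fin m, (i : ℕ) < k) :
    cantorCube d ℓ m (fun i => ε ⟨i, h i⟩) = pathCube d ℓ (natAddress ε) m := by
  unfold pathCube
  congr 1
  funext i
  simp [natAddress, h i]

lemma isClosed_cantorCube (n : ℕ) (ε : Fin n → Fin d → Bool) :
    IsClosed (cantorCube d ℓ n ε) := by
  simp only [cantorCube, Set.ofPred_forall, Set.ofPred_and]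
  exact isClosed_iInter fun j => (isClosed_le continuous_const (by fun_prop)).inter
    (isClosed_le (by fun_prop) continuous_const)

lemma pathCube_congr {δ δ' : ℕ → Fin d → Bool} {m : ℕ} (h : ∀ i < m, δ i = δ' i) :
    pathCube d ℓ δ m = pathCube d ℓ δ' m := by
  ext x
  simp only [mem_pathCube, cubeCorner_congr h]

lemma pathCube_antitone (hℓ : Antitone ℓ) (δ : ℕ → Fin d → Bool) :
    Antitone (pathCube d ℓ δ) := by
  refine antitone_nat_of_succ_le fun m x hx => mem_pathCube.2 fun j => ?_
  obtain ⟨hlo, hhi⟩ := mem_pathCube.1 hx j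
  have hstep := hℓ m.le_succ
  rw [cubeCorner_succ] at hlo hhi
  split_ifs at hlo hhi <;> constructor <;> linarith

lemma le_sub_apply_of_first_ne {δ δ' : ℕ → Fin d → Bool} {k : ℕ} {j : Fin d}
    (hagree : ∀ i < k, δ i = δ' i) (hδ : δ k j = true) (hδ' : δ' k j = false)
    {x y : EuclideanSpace ℝ (Fin d)} (hx : x ∈ pathCube d ℓ δ (k + 1))
    (hy : y ∈ pathCube d ℓ δ' (k + 1)) :
    ℓ k - 2 * ℓ (k + 1) ≤ x j - y j := by
  have hx := (mem_pathCube.1 hx j).1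
  have hy := (mem_pathCube.1 hy j).2
  rw [cubeCorner_succ, hδ, if_pos rfl] at hx
  rw [cubeCorner_succ, hδ', ← cubeCorner_congr hagree] at hy
  simp only [Bool.false_eq_true, if_false] at hy
  linarith

lemma le_norm_sub_of_ne {τ : ℝ} (hℓ : Antitone ℓ) (hstep : ∀ i, ℓ (i + 1) ≤ τ * ℓ i)
    (hτ : τ ≤ 1 / 2) {δ δ' : ℕ → Fin d → Bool} {m i : ℕ} (him : i ≤ m)
    (hne : δ i ≠ δ' i)
    {x y : EuclideanSpace ℝ (Fin d)} (hx : x ∈ pathCube d ℓ δ (m + 1))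
    (hy : y ∈ pathCube d ℓ δ' (m + 1)) :
    (1 - 2 * τ) * ℓ m ≤ ‖x - y‖ := by
  classical
  have hex : ∃ i, δ i ≠ δ' i := ⟨i, hne⟩
  set k := Nat.find hex
  have hkm : k ≤ m := (Nat.find_min' hex hne).trans him
  have hagree : ∀ i < k, δ i = δ' i := fun i hi => not_not.1 (Nat.find_min hex hi)
  obtain ⟨j, hj⟩ : ∃ j, δ k j ≠ δ' k j := Function.ne_iff.1 (Nat.find_spec hex)
  have hx := pathCube_antitone hℓ δ (Nat.succ_le_succ hkm) hx
  have hy := pathCube_antitone hℓ δ' (Nat.succ_le_succ hkm) hy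
  have hgap : ℓ k - 2 * ℓ (k + 1) ≤ |x j - y j| := by
    cases hδ : δ k j <;> cases hδ' : δ' k j <;> rw [hδ, hδ'] at hj
    · exact absurd rfl hj
    · rw [abs_sub_comm]
      exact (le_sub_apply_of_first_ne (fun i hi => (hagree i hi).symm) hδ' hδ hy hx).trans
        (le_abs_self _)
    · exact (le_sub_apply_of_first_ne hagree hδ hδ' hx hy).trans (le_abs_self _)
    · exact absurd rfl hj
  have hcoord : |x j - y j| ≤ ‖x - y‖ := by
    simpa [Real.norm_eq_abs] using PiLp.norm_apply_le (x - y) j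
  nlinarith [hstep k, hℓ hkm]

lemma exists_pathCube_le_norm_sub_of_mem_cantorE {τ : ℝ} (hℓ : Antitone ℓ)
    (hstep : ∀ i, ℓ (i + 1) ≤ τ * ℓ i) (hτ : τ ≤ 1 / 2) {N n : ℕ} (hnN : n + 1 ≤ N)
    {δ : ℕ → Fin d → Bool} {y : EuclideanSpace ℝ (Fin d)} (hyE : y ∈ cantorE d ℓ N)
    (hyQ : y ∉ pathCube d ℓ δ (n + 1)) :
    ∃ m ≤ n, y ∈ pathCube d ℓ δ m ∧
      ∀ x ∈ pathCube d ℓ δ (n + 1), (1 - 2 * τ) * ℓ m ≤ ‖x - y‖ := by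
  classical
  obtain ⟨ε, hy⟩ := Set.mem_iUnion.1 hyE
  replace hy : y ∈ pathCube d ℓ (natAddress ε) N := by
    rw [← cantorCube_eq_pathCube_natAddress ε Fin.is_lt]
    exact hy
  have hex : ∃ k, y ∉ pathCube d ℓ δ (k + 1) := ⟨n, hyQ⟩
  have hmn : Nat.find hex ≤ n := Nat.find_min' hex hyQ
  refine ⟨Nat.find hex, hmn, ?_, fun x hx => ?_⟩
  · cases h : Nat.find hex with
    | zero =>
      rw [pathCube_congr (δ' := natAddress ε) fun i hi => absurd hi (Nat.not_lt_zero i)]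
      exact pathCube_antitone hℓ _ (Nat.zero_le N) hy
    | succ k => exact not_not.1 (Nat.find_min hex (h ▸ k.lt_succ_self))
  · obtain ⟨i, him, hi⟩ : ∃ i ≤ Nat.find hex, δ i ≠ natAddress ε i := by
      by_contra! h
      exact Nat.find_spec hex <| (pathCube_congr fun i hi => h i (Nat.lt_succ_iff.1 hi)) ▸
        pathCube_antitone hℓ _ (by omega) hy
    exact le_norm_sub_of_ne hℓ hstep hτ him hi (pathCube_antitone hℓ δ (by omega) hx)
      (pathCube_antitone hℓ _ (by omega) hy)

lemma norm_sub_le_of_mem_pathCube {δ : ℕ → Fin d → Bool} {m : ℕ} (hℓ : 0 ≤ ℓ m)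
    {x x' : EuclideanSpace ℝ (Fin d)} (hx : x ∈ pathCube d ℓ δ m)
    (hx' : x' ∈ pathCube d ℓ δ m) : ‖x - x'‖ ≤ √d * ℓ m := by
  simpa using norm_le_sqrt_card_mul_of_abs_le (x - x') hℓ fun j => by
    have := mem_pathCube.1 hx j
    have := mem_pathCube.1 hx' j
    rw [PiLp.sub_apply, abs_le]
    constructor <;> linarith

end

instance (d : ℕ) (ℓ : ℕ → ℝ) (N : ℕ) : IsFiniteMeasure (cantorMeasure d ℓ N) :=
  inferInstanceAs (IsFiniteMeasure (ProbabilityTheory.cond volume (cantorE d ℓ N)))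

lemma measurableSet_cantorE (d : ℕ) (ℓ : ℕ → ℝ) (N : ℕ) :
    MeasurableSet (cantorE d ℓ N) :=
  MeasurableSet.iUnion fun ε => (isClosed_cantorCube N ε).measurableSet

lemma norm_rpow_neg_smul_self_le {E : Type*} [NormedAddCommGroup E] [NormedSpace ℝ E]
    {s r : ℝ} (hs : 0 ≤ s) (hr : 0 < r) {a : E} (ha : r ≤ ‖a‖) :
    ‖‖a‖ ^ (-(s + 1)) • a‖ ≤ r ^ (-s) := by
  rw [norm_smul, Real.norm_of_nonneg (by positivity), ← Real.rpow_add_one (hr.trans_le ha).ne',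
    show -(s + 1) + 1 = -s by ring]
  exact Real.rpow_le_rpow_of_nonpos hr ha (neg_nonpos.2 hs)

theorem norm_setIntegral_kernel_sub_le {d : ℕ} {ℓ : ℕ → ℝ} {s τ : ℝ} (hs : 0 ≤ s)
    (hℓ : ∀ i, 0 < ℓ i) (hstep : ∀ i, ℓ (i + 1) ≤ τ * ℓ i) (hτ : τ < 1 / 2)
    {N n : ℕ} (hnN : n + 1 ≤ N) (δ : ℕ → Fin d → Bool) {x x' : EuclideanSpace ℝ (Fin d)}
    (hx : x ∈ pathCube d ℓ δ (n + 1)) (hx' : x' ∈ pathCube d ℓ δ (n + 1)) :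
    ‖(∫ y in (pathCube d ℓ δ (n + 1))ᶜ,
          ‖x - y‖ ^ (-(s + 1)) • (x - y) ∂cantorMeasure d ℓ N) -
        ∫ y in (pathCube d ℓ δ (n + 1))ᶜ,
          ‖x' - y‖ ^ (-(s + 1)) • (x' - y) ∂cantorMeasure d ℓ N‖
      ≤ ∑ m ∈ range (n + 1), (cantorMeasure d ℓ N).real (pathCube d ℓ δ m) *
          ((s + 2) * ‖x - x'‖ / ((1 - 2 * τ) * ℓ m) ^ (s + 1)) := by
  set μ := cantorMeasure d ℓ N
  set Q := pathCube d ℓ δ (n + 1)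
  have hanti : Antitone ℓ :=
    antitone_nat_of_succ_le fun i => (hstep i).trans (by nlinarith [hℓ i])
  have h2τ : 0 < 1 - 2 * τ := by linarith
  have hmeas : ∀ m, MeasurableSet (pathCube d ℓ δ m) :=
    fun m => (isClosed_cantorCube m _).measurableSet
  have hfar : ∀ᵐ y ∂μ.restrict Qᶜ, ∃ m ≤ n, y ∈ pathCube d ℓ δ m ∧
      ∀ z ∈ Q, (1 - 2 * τ) * ℓ m ≤ ‖z - y‖ := by
    filter_upwards [ae_restrict_mem (hmeas _).compl,
      ae_restrict_of_ae (ProbabilityTheory.ae_cond_mem (measurableSet_cantorE d ℓ N))]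
      with y hyQ hyE
    exact exists_pathCube_le_norm_sub_of_mem_cantorE hanti hstep hτ.le hnN hyE hyQ
  have hint : ∀ z ∈ Q,
      Integrable (fun y => ‖z - y‖ ^ (-(s + 1)) • (z - y)) (μ.restrict Qᶜ) :=
    fun z hz => Integrable.of_bound (by fun_prop) (((1 - 2 * τ) * ℓ n) ^ (-s)) <| by
      filter_upwards [hfar] with y ⟨m, hmn, _, hdist⟩
      exact norm_rpow_neg_smul_self_le hs (mul_pos h2τ (hℓ n))
        ((mul_le_mul_of_nonneg_left (hanti hmn) h2τ.le).trans (hdist z hz))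
  rw [← integral_sub (hint x hx) (hint x' hx')]
  refine (norm_integral_le_sum_measureReal_mul (range (n + 1)) hmeas
    (b := fun m => (s + 2) * ‖x - x'‖ / ((1 - 2 * τ) * ℓ m) ^ (s + 1))
    (fun m => by have := hℓ m; positivity) ?_).trans ?_
  · filter_upwards [hfar] with y ⟨m, hmn, hym, hdist⟩
    refine ⟨m, mem_range.2 (Nat.lt_succ_of_le hmn), hym, ?_⟩
    have := norm_rpow_neg_smul_sub_le (p := s + 1) (by linarith) (mul_pos h2τ (hℓ m))
      (hdist x hx) (hdist x' hx')
    rwa [sub_sub_sub_cancel_right, show s + 1 + 1 = s + 2 by ring] at this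
  · gcongr with m
    · have := hℓ m; positivity
    exact ENNReal.toReal_mono (measure_ne_top _ _) (Measure.le_iff'.1 Measure.restrict_le_self _)

theorem stmt9_general (d : ℕ) (hd : 1 ≤ d) (s τ0 : ℝ) (hs0 : 0 < s)
    (hτ : τ0 < 1 / 2) :
    ∃ C : ℝ, 0 < C ∧
      ∀ (lam : ℕ → ℝ), (∀ n, 0 < lam n ∧ lam n ≤ τ0) →
      ∀ (ℓ : ℕ → ℝ), ℓ 0 = 1 → (∀ n, ℓ (n + 1) = lam (n + 1) * ℓ n) →
      ∀ (N n : ℕ), n + 1 ≤ N →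
      ∀ (ε : Fin (n + 1) → Fin d → Bool),
      ∀ x ∈ cantorCube d ℓ (n + 1) ε, ∀ x' ∈ cantorCube d ℓ (n + 1) ε,
        ‖(∫ y in (cantorCube d ℓ (n + 1) ε)ᶜ,
              (‖x - y‖ ^ (-(s + 1))) • (x - y) ∂(cantorMeasure d ℓ N)) -
          (∫ y in (cantorCube d ℓ (n + 1) ε)ᶜ,
              (‖x' - y‖ ^ (-(s + 1))) • (x' - y) ∂(cantorMeasure d ℓ N))‖
          ≤ C * (ℓ (n + 1) / ℓ n) *
            ∑ m ∈ (range (n + 1)).attach,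
              ((cantorMeasure d ℓ N (cantorCube d ℓ (m : ℕ)
                  (fun i => ε ⟨(i : ℕ),
                    lt_trans i.2 (Finset.mem_range.mp m.2)⟩))).toReal / ℓ (m : ℕ) ^ s) *
                (ℓ n / ℓ (m : ℕ)) := by
  have h2τ : 0 < 1 - 2 * τ0 := by linarith
  have hd' : (0 : ℝ) < d := by exact_mod_cast hd
  refine ⟨√d * (s + 2) / (1 - 2 * τ0) ^ (s + 1), by positivity, ?_⟩
  intro lam hlam ℓ hℓ0 hℓ N n hnN ε x hx x' hx'
  have hpos : ∀ i, 0 < ℓ i := fun i => by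
    induction i with
    | zero => rw [hℓ0]; exact one_pos
    | succ i ih => rw [hℓ]; exact mul_pos (hlam _).1 ih
  have hstep : ∀ i, ℓ (i + 1) ≤ τ0 * ℓ i := fun i => by
    rw [hℓ]; exact mul_le_mul_of_nonneg_right (hlam _).2 (hpos i).le
  simp_rw [cantorCube_eq_pathCube_natAddress ε] at hx hx' ⊢
  rw [sum_attach (range (n + 1)) fun m =>
    ((cantorMeasure d ℓ N (pathCube d ℓ (natAddress ε) m)).toReal / ℓ m ^ s) * (ℓ n / ℓ m),
    mul_sum]
  refine (norm_setIntegral_kernel_sub_le hs0.le hpos hstep hτ hnN _ hx hx').trans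
    (sum_le_sum fun m _ => ?_)
  have hdiam := norm_sub_le_of_mem_pathCube (hpos (n + 1)).le hx hx'
  rw [Real.mul_rpow h2τ.le (hpos m).le, Real.rpow_add_one (hpos m).ne']
  calc _ ≤ (cantorMeasure d ℓ N).real (pathCube d ℓ (natAddress ε) m) *
        ((s + 2) * (√d * ℓ (n + 1)) / ((1 - 2 * τ0) ^ (s + 1) * (ℓ m ^ s * ℓ m))) := by
        have := hpos m
        gcongr
    _ = _ := by
        have := hpos n
        have := hpos m
        rw [measureReal_def]
        field_simp

theorem stmt9 (d : ℕ) (hd : 1 ≤ d) (s τ0 : ℝ) (hs0 : 0 < s) (hsd : s < d)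
    (hτ0 : 0 < τ0) (hτ : τ0 < 1 / 2) :
    ∃ C : ℝ, 0 < C ∧
      ∀ (lam : ℕ → ℝ), (∀ n, 0 < lam n ∧ lam n ≤ τ0) →
      ∀ (ℓ : ℕ → ℝ), ℓ 0 = 1 → (∀ n, ℓ (n + 1) = lam (n + 1) * ℓ n) →
      ∀ (N n : ℕ), n + 1 ≤ N →
      ∀ (ε : Fin (n + 1) → Fin d → Bool),
      ∀ x ∈ cantorCube d ℓ (n + 1) ε, ∀ x' ∈ cantorCube d ℓ (n + 1) ε,
        ‖(∫ y in (cantorCube d ℓ (n + 1) ε)ᶜ,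
              (‖x - y‖ ^ (-(s + 1))) • (x - y) ∂(cantorMeasure d ℓ N)) -
          (∫ y in (cantorCube d ℓ (n + 1) ε)ᶜ,
              (‖x' - y‖ ^ (-(s + 1))) • (x' - y) ∂(cantorMeasure d ℓ N))‖
          ≤ C * (ℓ (n + 1) / ℓ n) *
            ∑ m ∈ (range (n + 1)).attach,
              ((cantorMeasure d ℓ N (cantorCube d ℓ (m : ℕ)
                  (fun i => ε ⟨(i : ℕ),
                    lt_trans i.2 (Finset.mem_range.mp m.2)⟩))).toReal / ℓ (m : ℕ) ^ s) *
                (ℓ n / ℓ (m : ℕ)) :=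
  stmt9_general d hd s τ0 hs0 hτ
end
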